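/- If K is a finitely generated max cone in ℝ≥0^n (K = span(S) for some finite set S), then the set of scaled extremals of K is a scaled basis for K, and it is the unique scaled basis: every basis of K consisting of scaled elements equals the set of scaled extremals of K. -/

import Mathlib

open scoped NNReal

/-- The max-algebraic span of `S`: all vectors `⨆_{x ∈ S} λ_x • x` where only
finitely many coefficients `λ_x` are nonzero (`MaxSpan ∅ = {0}`). -/
def MaxSpan {n : ℕ} (S : Set (Fin n → ℝ≥0)) : Set (Fin n → ℝ≥0) :=
  {u | ∃ (F : Finset (Fin n → ℝ≥0)) (lam : (Fin n → ℝ≥0) → ℝ≥0),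
    ↑F ⊆ S ∧ u = F.sup (fun x => lam x • x)}

/-- A max cone: a subset of `ℝ≥0ⁿ` closed under pointwise max `⊔` and under
multiplication by nonnegative scalars. -/
def MaxCone {n : ℕ} (K : Set (Fin n → ℝ≥0)) : Prop :=
  0 ∈ K ∧ (∀ x ∈ K, ∀ y ∈ K, x ⊔ y ∈ K) ∧ (∀ (c : ℝ≥0), ∀ x ∈ K, c • x ∈ K)

/-- `u` is an extremal in `K` if `u = v ⊔ w` with `v, w ∈ K` implies `u = v` or `u = w`. -/
def IsExtremal {n : ℕ} (K : Set (Fin n → ℝ≥0)) (u : Fin n → ℝ≥0) : Prop :=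
  u ∈ K ∧ ∀ v ∈ K, ∀ w ∈ K, u = v ⊔ w → u = v ∨ u = w

/-- A vector is scaled if its max norm `⨆ i, x i` equals `1`. -/
def Scaled {n : ℕ} (x : Fin n → ℝ≥0) : Prop := (⨆ i, x i) = 1

/-- The support of a vector. -/
def supp {n : ℕ} (v : Fin n → ℝ≥0) : Set (Fin n) := {j | 0 < v j}

/-- For `j ∈ supp u`, `rescale u j = (1 / u j) • u`, the `j`-scaling `u(j)`. -/
noncomputable def rescale {n : ℕ} (u : Fin n → ℝ≥0) (j : Fin n) : Fin n → ℝ≥0 :=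
  (u j)⁻¹ • u

/-- `T(j) = {u(j) : u ∈ T, j ∈ supp u}`. -/
noncomputable def setScale {n : ℕ} (T : Set (Fin n → ℝ≥0)) (j : Fin n) :
    Set (Fin n → ℝ≥0) :=
  {y | ∃ u ∈ T, j ∈ supp u ∧ y = rescale u j}

/-- `u` is minimal in `T` if `v ∈ T` and `v ≤ u` imply `v = u`. -/
def MinimalIn {n : ℕ} (T : Set (Fin n → ℝ≥0)) (u : Fin n → ℝ≥0) : Prop :=
  u ∈ T ∧ ∀ v ∈ T, v ≤ u → v = u

/-- A set is totally dependent if each of its elements is a max combination of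
the remaining ones. -/
def TotallyDependent {n : ℕ} (S : Set (Fin n → ℝ≥0)) : Prop :=
  ∀ x ∈ S, x ∈ MaxSpan (S \ {x})

/-- A set is independent if none of its elements is a max combination of
the remaining ones. -/
def IndependentSet {n : ℕ} (S : Set (Fin n → ℝ≥0)) : Prop :=
  ∀ x ∈ S, x ∉ MaxSpan (S \ {x})

/-- A basis for `K` is an independent set of generators for `K`. -/
def IsBasis {n : ℕ} (S K : Set (Fin n → ℝ≥0)) : Prop :=
  IndependentSet S ∧ MaxSpan S = K

/-!
A non-extremal `x = v ⊔ w` of `span S` can be dropped from `S`: writing `v = c • x ⊔ r` and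
`w = d • x ⊔ r'` with `r, r'` spanned by `S \ {x}`, the strict inequalities `v, w < x` force
`c, d < 1`, and a coefficient below `1` in front of `x` itself is absorbed, so `x = r ⊔ r'`.
Hence a minimal generating subset of a finite generating set consists of extremals, and so
the scaled extremals generate. Conversely an extremal is not a finite supremum of other
elements of the cone, so it is a multiple of any generating family it lies in the span of;
among scaled vectors that multiple is `1`. This gives both independence and uniqueness.
-/

section Pi

variable {ι : Type*}

lemma smul_sup_pi (c : ℝ≥0) (a b : ι → ℝ≥0) : c • (a ⊔ b) = c • a ⊔ c • b := by
  ext i; simp [mul_max_of_nonneg]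

lemma sup_smul_pi (c d : ℝ≥0) (a : ι → ℝ≥0) : (c ⊔ d) • a = c • a ⊔ d • a := by
  ext i; simp [max_mul_of_nonneg]

lemma smul_finset_sup_pi {κ : Type*} (c : ℝ≥0) (s : Finset κ) (f : κ → ι → ℝ≥0) :
    c • s.sup f = s.sup (fun k => c • f k) :=
  Finset.apply_sup_eq_sup_comp (c • ·) (smul_sup_pi c) (by simp [bot_eq_zero])

lemma finset_sup_ite_smul {s t : Finset (ι → ℝ≥0)} [DecidablePred (· ∈ s)] (hst : s ⊆ t)
    (lam : (ι → ℝ≥0) → ℝ≥0) :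
    t.sup (fun z => (if z ∈ s then lam z else 0) • z) = s.sup (fun z => lam z • z) := by
  classical
  simp_rw [ite_smul, zero_smul]
  rw [Finset.sup_ite, Finset.filter_mem_eq_inter, Finset.inter_eq_right.mpr hst, ← bot_eq_zero,
    Finset.sup_bot, sup_bot_eq]

lemma le_of_le_sup_of_le_smul {x y r : ι → ℝ≥0} {c : ℝ≥0} (hc : c < 1) (hy : y ≤ c • x)
    (hx : x ≤ y ⊔ r) : x ≤ r := by
  intro i
  by_contra! h
  have hxi : x i ≤ c * x i :=
    ((le_sup_iff.mp (hx i)).resolve_right h.not_ge).trans (hy i)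
  exact (mul_lt_of_lt_one_left (pos_of_gt h) hc).not_ge hxi

end Pi

section MaxCone

variable {n : ℕ} {S T K : Set (Fin n → ℝ≥0)} {x u : Fin n → ℝ≥0}

lemma subset_maxSpan : S ⊆ MaxSpan S :=
  fun x hx => ⟨{x}, fun _ => 1, by simpa, by simp⟩

lemma zero_mem_maxSpan : 0 ∈ MaxSpan S :=
  ⟨∅, fun _ => 0, by simp, by simp [bot_eq_zero]⟩

lemma smul_mem_maxSpan (c : ℝ≥0) (hu : u ∈ MaxSpan S) : c • u ∈ MaxSpan S := by
  obtain ⟨F, lam, hF, rfl⟩ := hu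
  exact ⟨F, fun x => c * lam x, hF, by simp [smul_finset_sup_pi, smul_smul]⟩

lemma sup_mem_maxSpan {v : Fin n → ℝ≥0} (hu : u ∈ MaxSpan S) (hv : v ∈ MaxSpan S) :
    u ⊔ v ∈ MaxSpan S := by
  classical
  obtain ⟨F, lam, hF, rfl⟩ := hu
  obtain ⟨G, mu, hG, rfl⟩ := hv
  refine ⟨F ∪ G, fun z => (if z ∈ F then lam z else 0) ⊔ (if z ∈ G then mu z else 0),
    by simpa using Set.union_subset hF hG, ?_⟩
  rw [← finset_sup_ite_smul Finset.subset_union_left lam,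
    ← finset_sup_ite_smul Finset.subset_union_right mu, ← Finset.sup_sup]
  simp only [sup_smul_pi]
  rfl

lemma maxCone_maxSpan : MaxCone (MaxSpan S) :=
  ⟨zero_mem_maxSpan, fun _ hx _ hy => sup_mem_maxSpan hx hy, fun c _ hx => smul_mem_maxSpan c hx⟩

lemma MaxCone.finset_sup_mem (hK : MaxCone K) {κ : Type*} {s : Finset κ}
    {f : κ → Fin n → ℝ≥0} (hf : ∀ k ∈ s, f k ∈ K) : s.sup f ∈ K :=
  Finset.sup_induction (by simpa [bot_eq_zero] using hK.1) (fun a ha b hb => hK.2.1 a ha b hb) hf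

lemma MaxCone.maxSpan_subset (hK : MaxCone K) (hS : S ⊆ K) : MaxSpan S ⊆ K := by
  rintro u ⟨F, lam, hF, rfl⟩
  exact hK.finset_sup_mem fun x hx => hK.2.2 _ x (hS (hF hx))

lemma maxSpan_subset_maxSpan (h : S ⊆ MaxSpan T) : MaxSpan S ⊆ MaxSpan T :=
  maxCone_maxSpan.maxSpan_subset h

lemma maxSpan_mono (h : S ⊆ T) : MaxSpan S ⊆ MaxSpan T :=
  maxSpan_subset_maxSpan (h.trans subset_maxSpan)

lemma maxSpan_diff_singleton_of_mem (hx : x ∈ MaxSpan (S \ {x})) :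
    MaxSpan (S \ {x}) = MaxSpan S := by
  refine (maxSpan_mono Set.sdiff_subset).antisymm (maxSpan_subset_maxSpan fun y hy => ?_)
  by_cases hyx : y = x
  · exact hyx ▸ hx
  · exact subset_maxSpan ⟨hy, hyx⟩

lemma exists_eq_smul_sup_of_mem_maxSpan (x : Fin n → ℝ≥0) {v : Fin n → ℝ≥0}
    (hv : v ∈ MaxSpan S) : ∃ c : ℝ≥0, ∃ r ∈ MaxSpan (S \ {x}), v = c • x ⊔ r := by
  classical
  obtain ⟨F, lam, hF, rfl⟩ := hv
  refine ⟨if x ∈ F then lam x else 0, (F.erase x).sup fun z => lam z • z,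
    ⟨F.erase x, lam, by rw [Finset.coe_erase]; exact Set.sdiff_subset_sdiff_left hF, rfl⟩, ?_⟩
  split_ifs with hx
  · rw [← Finset.sup_insert (f := fun z => lam z • z), Finset.insert_erase hx]
  · rw [Finset.erase_eq_of_notMem hx, zero_smul, ← bot_eq_zero, bot_sup_eq]

lemma lt_one_of_smul_sup_lt {c : ℝ≥0} {r : Fin n → ℝ≥0} (h : c • x ⊔ r < x) : c < 1 := by
  by_contra! hc
  exact h.not_ge ((one_smul ℝ≥0 x).symm.le.trans
    ((smul_le_smul_of_nonneg_right hc bot_le).trans le_sup_left))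

lemma mem_maxSpan_diff_singleton_of_not_isExtremal (hx : x ∈ MaxSpan S)
    (hnx : ¬IsExtremal (MaxSpan S) x) : x ∈ MaxSpan (S \ {x}) := by
  obtain ⟨v, hv, w, hw, hxvw, hxv, hxw⟩ :
      ∃ v ∈ MaxSpan S, ∃ w ∈ MaxSpan S, x = v ⊔ w ∧ x ≠ v ∧ x ≠ w := by
    simpa [IsExtremal, hx] using hnx
  obtain ⟨c, r, hr, rfl⟩ := exists_eq_smul_sup_of_mem_maxSpan x hv
  obtain ⟨d, r', hr', rfl⟩ := exists_eq_smul_sup_of_mem_maxSpan x hw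
  have hvx : c • x ⊔ r < x := lt_of_le_of_ne (le_sup_left.trans hxvw.ge) (Ne.symm hxv)
  have hwx : d • x ⊔ r' < x := lt_of_le_of_ne (le_sup_right.trans hxvw.ge) (Ne.symm hxw)
  have hcd : c ⊔ d < 1 := max_lt (lt_one_of_smul_sup_lt hvx) (lt_one_of_smul_sup_lt hwx)
  have hle : x ≤ r ⊔ r' :=
    le_of_le_sup_of_le_smul hcd (sup_smul_pi c d x).ge (hxvw.trans (by ac_rfl)).le
  have hge : r ⊔ r' ≤ x := sup_le (le_sup_right.trans hvx.le) (le_sup_right.trans hwx.le)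
  convert sup_mem_maxSpan hr hr' using 1
  exact hle.antisymm hge

lemma exists_subset_maxSpan_eq_forall_isExtremal (hS : S.Finite) :
    ∃ T ⊆ S, MaxSpan T = MaxSpan S ∧ ∀ x ∈ T, IsExtremal (MaxSpan S) x := by
  obtain ⟨T, ⟨hTS, hT⟩, hmin⟩ := (hS.finite_subsets.subset fun T (hT : T ⊆ S ∧ _) => hT.1
    ).exists_minimal (⟨S, subset_rfl, rfl⟩ : {T | T ⊆ S ∧ MaxSpan T = MaxSpan S}.Nonempty)
  refine ⟨T, hTS, hT, fun x hx => by_contra fun hnx => ?_⟩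
  have hdiff := mem_maxSpan_diff_singleton_of_not_isExtremal (subset_maxSpan hx) (hT ▸ hnx)
  exact (hmin ⟨Set.sdiff_subset.trans hTS, (maxSpan_diff_singleton_of_mem hdiff).trans hT⟩
    Set.sdiff_subset hx).2 rfl

lemma IsExtremal.exists_eq_of_eq_finset_sup (hK : MaxCone K) (hu : IsExtremal K u) (hu0 : u ≠ 0)
    {κ : Type*} {s : Finset κ} {f : κ → Fin n → ℝ≥0} (hf : ∀ k ∈ s, f k ∈ K)
    (h : u = s.sup f) : ∃ k ∈ s, u = f k :=
  (Finset.sup_induction (p := fun y => y ∈ K ∧ (u = y → ∃ k ∈ s, u = f k))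
    ⟨by simpa [bot_eq_zero] using hK.1, fun h => (hu0 (h.trans bot_eq_zero)).elim⟩
    (fun a ha b hb => ⟨hK.2.1 a ha.1 b hb.1, fun h => (hu.2 a ha.1 b hb.1 h).elim ha.2 hb.2⟩)
    (fun k hk => ⟨hf k hk, fun h => ⟨k, hk, h⟩⟩)).2 h

lemma IsExtremal.smul (hK : MaxCone K) (hu : IsExtremal K u) {c : ℝ≥0} (hc : c ≠ 0) :
    IsExtremal K (c • u) := by
  refine ⟨hK.2.2 c u hu.1, fun v hv w hw h => ?_⟩
  have hu' : u = c⁻¹ • v ⊔ c⁻¹ • w := by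
    rw [← smul_sup_pi, ← h, smul_smul, inv_mul_cancel₀ hc, one_smul]
  refine (hu.2 _ (hK.2.2 c⁻¹ v hv) _ (hK.2.2 c⁻¹ w hw) hu').imp ?_ ?_ <;>
  · rintro rfl; rw [smul_smul, mul_inv_cancel₀ hc, one_smul]

lemma iSup_smul_apply (c : ℝ≥0) (x : Fin n → ℝ≥0) : ⨆ i, (c • x) i = c * ⨆ i, x i :=
  (NNReal.mul_iSup x c).symm

lemma iSup_apply_eq_zero_iff : ⨆ i, x i = 0 ↔ x = 0 :=
  (NNReal.iSup_eq_zero (Finite.bddAbove_range x)).trans funext_iff.symm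

lemma Scaled.ne_zero (hx : Scaled x) : x ≠ 0 := by
  rintro rfl
  exact one_ne_zero (hx.symm.trans (iSup_apply_eq_zero_iff.mpr rfl))

lemma Scaled.eq_of_eq_smul {y : Fin n → ℝ≥0} {c : ℝ≥0} (hx : Scaled x) (hy : Scaled y)
    (h : x = c • y) : x = y := by
  have hc : c = 1 :=
    calc c = c * ⨆ i, y i := by rw [hy, mul_one]
      _ = 1 := by rw [← iSup_smul_apply, ← h, hx]
  rw [h, hc, one_smul]

lemma exists_scaled_smul (hx : x ≠ 0) : ∃ c : ℝ≥0, c ≠ 0 ∧ Scaled (c • x) := by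
  have hc : ⨆ i, x i ≠ 0 := mt iSup_apply_eq_zero_iff.mp hx
  exact ⟨(⨆ i, x i)⁻¹, inv_ne_zero hc, by rw [Scaled, iSup_smul_apply, inv_mul_cancel₀ hc]⟩

lemma IsExtremal.mem_of_mem_maxSpan (hK : MaxCone K) (hu : IsExtremal K u) (hus : Scaled u)
    (hTK : T ⊆ K) (hTs : ∀ t ∈ T, Scaled t) (h : u ∈ MaxSpan T) : u ∈ T := by
  obtain ⟨F, lam, hF, hsup⟩ := h
  obtain ⟨t, ht, hut⟩ := hu.exists_eq_of_eq_finset_sup hK hus.ne_zero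
    (fun t ht => hK.2.2 _ t (hTK (hF ht))) hsup
  exact (hus.eq_of_eq_smul (hTs t (hF ht)) hut) ▸ hF ht

def scaledExtremals (K : Set (Fin n → ℝ≥0)) : Set (Fin n → ℝ≥0) :=
  {x | IsExtremal K x ∧ Scaled x}

lemma independentSet_scaledExtremals (hK : MaxCone K) : IndependentSet (scaledExtremals K) :=
  fun _ hx hmem => (hx.1.mem_of_mem_maxSpan hK hx.2 (fun _ hy => hy.1.1.1)
    (fun _ hy => hy.1.2) hmem).2 rfl

lemma maxSpan_scaledExtremals (hS : S.Finite) :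
    MaxSpan (scaledExtremals (MaxSpan S)) = MaxSpan S := by
  obtain ⟨T, -, hT, hText⟩ := exists_subset_maxSpan_eq_forall_isExtremal hS
  refine (maxCone_maxSpan.maxSpan_subset fun x hx => hx.1.1).antisymm
    (hT.symm.subset.trans (maxSpan_subset_maxSpan fun t ht => ?_))
  by_cases ht0 : t = 0
  · exact ht0 ▸ zero_mem_maxSpan
  obtain ⟨c, hc, hct⟩ := exists_scaled_smul ht0
  have hts : c • t ∈ scaledExtremals (MaxSpan S) := ⟨(hText t ht).smul maxCone_maxSpan hc, hct⟩
  simpa [smul_smul, hc] using smul_mem_maxSpan c⁻¹ (subset_maxSpan hts)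

lemma IsBasis.eq_scaledExtremals {B : Set (Fin n → ℝ≥0)} (hB : IsBasis B K)
    (hBs : ∀ x ∈ B, Scaled x) : B = scaledExtremals K := by
  obtain ⟨hind, rfl⟩ := hB
  ext b
  refine ⟨fun hb => ⟨by_contra fun hnb => hind b hb ?_, hBs b hb⟩,
    fun hb => hb.1.mem_of_mem_maxSpan maxCone_maxSpan hb.2 subset_maxSpan hBs hb.1.1⟩
  exact mem_maxSpan_diff_singleton_of_not_isExtremal (subset_maxSpan hb) hnb

end MaxCone

theorem stmt9_general {n : ℕ} (K : Set (Fin n → ℝ≥0))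
    (hfg : ∃ S : Set (Fin n → ℝ≥0), S.Finite ∧ MaxSpan S = K) :
    IsBasis {x | IsExtremal K x ∧ Scaled x} K ∧
    ∀ B : Set (Fin n → ℝ≥0), (∀ x ∈ B, Scaled x) → IsBasis B K →
      B = {x | IsExtremal K x ∧ Scaled x} := by
  obtain ⟨S, hS, rfl⟩ := hfg
  exact ⟨⟨independentSet_scaledExtremals maxCone_maxSpan, maxSpan_scaledExtremals hS⟩,
    fun B hBs hB => hB.eq_scaledExtremals hBs⟩

/-- a finitely generated max cone `K` has the set of its scaled
extremals as a basis, and this is the unique basis consisting of scaled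
elements. -/
theorem stmt9 {n : ℕ} (K : Set (Fin n → ℝ≥0)) (hK : MaxCone K)
    (hfg : ∃ S : Set (Fin n → ℝ≥0), S.Finite ∧ MaxSpan S = K) :
    IsBasis {x | IsExtremal K x ∧ Scaled x} K ∧
    ∀ B : Set (Fin n → ℝ≥0), (∀ x ∈ B, Scaled x) → IsBasis B K →
      B = {x | IsExtremal K x ∧ Scaled x} :=
  stmt9_general K hfg
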